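/- arXiv:1111.5879 — 2 statements merged into one kernel-verified Lean document; each statement's English description precedes it below -/
import Mathlib

section
/- Let s > 3/2 and r ≤ 1. Then there exists a constant C = C(s, r) > 0 such that for every integer k ≥ 0, ∑_{n > 2k} (1+n²)^{1-s} (1+(n-k)²)^{r-1} ≤ C (1+k²)^{r-1}, where the sum is over integers n with n > 2k. -/
open scoped ENNReal

/-! On the tail `n > 2k` one has `n - k > k ≥ 0`, so the nonpositive power `(1 + (n-k)²)^(r-1)` is
at most `(1 + k²)^(r-1)`; what remains is the convergent series `∑ (1 + n²)^(1-s)`, since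
`2(1 - s) < -1`. -/

theorem summable_one_add_sq_rpow {q : ℝ} (hq : 2 * q < -1) :
    Summable fun n : ℤ => (1 + (n : ℝ) ^ 2) ^ q := by
  have hsum : Summable fun n : ℤ => |(n : ℝ)| ^ (2 * q) := by
    simpa using Real.summable_abs_int_rpow (b := -(2 * q)) (by linarith)
  refine Summable.of_norm_bounded_eventually hsum ?_
  filter_upwards [(Set.finite_singleton (0 : ℤ)).compl_mem_cofinite] with n hn
  have hn1 : (1 : ℝ) ≤ (n : ℝ) ^ 2 := by
    rw [one_le_sq_iff_one_le_abs]
    exact_mod_cast Int.one_le_abs hn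
  rw [Real.norm_of_nonneg (by positivity)]
  calc (1 + (n : ℝ) ^ 2) ^ q
      ≤ ((n : ℝ) ^ 2) ^ q := Real.rpow_le_rpow_of_nonpos (by linarith) (by linarith) (by linarith)
    _ = |(n : ℝ)| ^ (2 * q) := by
      rw [← sq_abs, ← Real.rpow_natCast, ← Real.rpow_mul (abs_nonneg _)]
      norm_num

theorem one_add_sq_rpow_le_of_abs_le {q a b : ℝ} (hq : q ≤ 0) (hab : |a| ≤ |b|) :
    (1 + b ^ 2) ^ q ≤ (1 + a ^ 2) ^ q :=
  Real.rpow_le_rpow_of_nonpos (by positivity) (add_le_add_right (sq_le_sq.mpr hab) 1) hq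

theorem ENNReal.tsum_ofReal_mul_le {α : Type*} {f g : α → ℝ} {B : ℝ} (hf : 0 ≤ f)
    (hfs : Summable f) (hB : 0 ≤ B) (hg : ∀ a, g a ≤ B) :
    ∑' a, ENNReal.ofReal (f a * g a) ≤ ENNReal.ofReal ((∑' a, f a) * B) :=
  calc ∑' a, ENNReal.ofReal (f a * g a)
      ≤ ∑' a, ENNReal.ofReal (f a * B) :=
        ENNReal.tsum_le_tsum fun a => ENNReal.ofReal_le_ofReal
          (mul_le_mul_of_nonneg_left (hg a) (hf a))
    _ = ENNReal.ofReal ((∑' a, f a) * B) := by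
      rw [← ENNReal.ofReal_tsum_of_nonneg (fun a => mul_nonneg (hf a) hB) (hfs.mul_right B),
        tsum_mul_right]

/-- For `s > 3/2` and `r ≤ 1`, there is `C = C(s,r) > 0` such that for every
integer `k ≥ 0`, `∑_{n > 2k} (1+n²)^{1-s} (1+(n-k)²)^{r-1} ≤ C (1+k²)^{r-1}`. -/
theorem sum_tail_estimate (s r : ℝ) (hs : 3/2 < s) (hr : r ≤ 1) :
    ∃ C : ℝ, 0 < C ∧ ∀ k : ℤ, 0 ≤ k →
      ∑' n : {m : ℤ // 2 * k < m}, ENNReal.ofReal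
          ((1 + ((n : ℤ) : ℝ) ^ 2) ^ (1 - s) *
            (1 + (((n : ℤ) : ℝ) - (k : ℝ)) ^ 2) ^ (r - 1)) ≤
        ENNReal.ofReal (C * (1 + (k : ℝ) ^ 2) ^ (r - 1)) := by
  set f : ℤ → ℝ := fun n => (1 + (n : ℝ) ^ 2) ^ (1 - s)
  have hf : 0 ≤ f := fun n => by positivity
  have hfs : Summable f := summable_one_add_sq_rpow (by linarith)
  refine ⟨∑' n, f n, hfs.tsum_pos hf 0 (by positivity), fun k hk => ?_⟩
  have hk_le : ∀ n : {m : ℤ // 2 * k < m}, |(k : ℝ)| ≤ |((n : ℤ) : ℝ) - k| := fun n => by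
    have hkn : 2 * (k : ℝ) < (n : ℤ) := by exact_mod_cast n.2
    have hk0 : (0 : ℝ) ≤ k := by exact_mod_cast hk
    rw [abs_of_nonneg hk0, abs_of_nonneg (by linarith)]
    linarith
  calc _ ≤ ENNReal.ofReal ((∑' n : {m : ℤ // 2 * k < m}, f n) * (1 + (k : ℝ) ^ 2) ^ (r - 1)) :=
        ENNReal.tsum_ofReal_mul_le (fun n => hf n) (hfs.subtype _) (by positivity)
          fun n => one_add_sq_rpow_le_of_abs_le (by linarith) (hk_le n)
    _ ≤ _ := ENNReal.ofReal_le_ofReal <| mul_le_mul_of_nonneg_right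
        (hfs.tsum_subtype_le _ _ hf) (by positivity)
end

section
/- Let p, q > 0 with p + q > 1. Then there exists a constant C = C(p, q) > 0 such that for every a ≥ 0, ∫_{|x| ≥ 2a} (1+|a+x|)^{−p} (1+|a−x|)^{−q} dx ≤ C (1+a)^{1−p−q}, where the integral is over the set {x ∈ ℝ : |x| ≥ 2a}. -/
/-!
On `|x| ≥ 2a` both `1 + |a + x|` and `1 + |a - x|` are at least `(1 + |x|) / 2`, so the kernel is
dominated by `2 ^ (p + q) * (1 + |x|) ^ (-(p + q))`. This is even in `x`, and its integral over
`x ≥ 2a` is `(1 + 2a) ^ (1 - p - q) / (p + q - 1) ≤ (1 + a) ^ (1 - p - q) / (p + q - 1)`.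
-/

open MeasureTheory Set
open scoped ENNReal

lemma one_add_abs_div_two_le_one_add_abs_add {a x : ℝ} (h : 2 * |a| ≤ |x|) :
    (1 + |x|) / 2 ≤ 1 + |a + x| := by
  have := abs_sub_abs_le_abs_sub x (-a)
  rw [abs_neg, sub_neg_eq_add, add_comm] at this
  linarith

lemma one_add_abs_add_rpow_neg_mul_le {p q a x : ℝ} (hp : 0 ≤ p) (hq : 0 ≤ q)
    (h : 2 * |a| ≤ |x|) :
    (1 + |a + x|) ^ (-p) * (1 + |a - x|) ^ (-q) ≤ 2 ^ (p + q) * (1 + |x|) ^ (-(p + q)) := by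
  have hm : 0 < (1 + |x|) / 2 := by positivity
  have hplus := one_add_abs_div_two_le_one_add_abs_add h
  have hminus : (1 + |x|) / 2 ≤ 1 + |a - x| := by
    rw [abs_sub_comm, sub_eq_neg_add]
    exact one_add_abs_div_two_le_one_add_abs_add (by rwa [abs_neg])
  calc (1 + |a + x|) ^ (-p) * (1 + |a - x|) ^ (-q)
      ≤ ((1 + |x|) / 2) ^ (-p) * ((1 + |x|) / 2) ^ (-q) := by
        gcongr ?_ * ?_
        · exact Real.rpow_le_rpow_of_nonpos hm hplus (by linarith)
        · exact Real.rpow_le_rpow_of_nonpos hm hminus (by linarith)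
    _ = 2 ^ (p + q) * (1 + |x|) ^ (-(p + q)) := by
        rw [← Real.rpow_add hm, ← neg_add, Real.div_rpow (by positivity) zero_le_two,
          Real.rpow_neg zero_le_two, Real.rpow_neg (by positivity)]
        field_simp

lemma lintegral_Ioi_rpow_neg {r c : ℝ} (hr : 1 < r) (hc : 0 < c) :
    ∫⁻ x in Ioi c, ENNReal.ofReal (x ^ (-r)) = ENNReal.ofReal (c ^ (1 - r) / (r - 1)) := by
  rw [← ofReal_integral_eq_lintegral_ofReal (integrableOn_Ioi_rpow_of_lt (by linarith) hc),
    integral_Ioi_rpow_of_lt (by linarith) hc]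
  · congr 1
    rw [show -r + 1 = -(r - 1) by ring, neg_div_neg_eq, neg_sub]
  · filter_upwards [self_mem_ae_restrict measurableSet_Ioi] with x hx
    exact Real.rpow_nonneg (hc.trans hx).le _

lemma lintegral_Ioi_one_add_rpow_neg {r c : ℝ} (hr : 1 < r) (hc : -1 < c) :
    ∫⁻ x in Ioi c, ENNReal.ofReal ((1 + x) ^ (-r)) =
      ENNReal.ofReal ((1 + c) ^ (1 - r) / (r - 1)) := by
  have hshift := (measurePreserving_add_left volume 1).setLIntegral_comp_preimage_emb
    (measurableEmbedding_addLeft 1) (fun y => ENNReal.ofReal (y ^ (-r))) (Ioi (1 + c))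
  rw [preimage_const_add_Ioi, add_sub_cancel_left] at hshift
  rw [hshift, lintegral_Ioi_rpow_neg hr (by linarith)]

lemma setLIntegral_comp_abs_le_two_mul (g : ℝ → ℝ≥0∞) {c : ℝ} (hc : 0 ≤ c) :
    ∫⁻ x in {x | c ≤ |x|}, g |x| ≤ 2 * ∫⁻ x in Ioi c, g x := by
  have hsplit : {x : ℝ | c ≤ |x|} = Iic (-c) ∪ Ici c := by
    ext x; simp only [mem_ofPred_eq, mem_union, mem_Iic, mem_Ici, le_abs, le_neg]; tauto
  have hreflect :=
    (Measure.measurePreserving_neg (volume : Measure ℝ)).setLIntegral_comp_preimage_emb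
      (MeasurableEquiv.neg ℝ).measurableEmbedding (fun y => g |y|) (Ici c)
  have hright : ∫⁻ x in Ici c, g |x| = ∫⁻ x in Ioi c, g x := by
    rw [setLIntegral_congr Ioi_ae_eq_Ici.symm]
    exact setLIntegral_congr_fun measurableSet_Ioi fun x hx => by
      rw [abs_of_pos (hc.trans_lt hx)]
  simp only [abs_neg, neg_preimage, neg_Ici] at hreflect
  calc ∫⁻ x in {x | c ≤ |x|}, g |x|
      ≤ (∫⁻ x in Iic (-c), g |x|) + ∫⁻ x in Ici c, g |x| := hsplit ▸ lintegral_union_le _ _ _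
    _ = 2 * ∫⁻ x in Ioi c, g x := by rw [hreflect, hright, two_mul]

/-- For `p, q > 0` with `p + q > 1`, there is `C = C(p,q) > 0` such that for
every `a ≥ 0`, `∫_{|x| ≥ 2a} (1+|a+x|)^{-p} (1+|a-x|)^{-q} dx ≤ C (1+a)^{1-p-q}`. -/
theorem kernel_tail_integral_estimate (p q : ℝ) (hp : 0 < p) (hq : 0 < q) (hpq : 1 < p + q) :
    ∃ C : ℝ, 0 < C ∧ ∀ a : ℝ, 0 ≤ a →
      (∫⁻ x in {x : ℝ | 2 * a ≤ |x|},
          ENNReal.ofReal ((1 + |a + x|) ^ (-p) * (1 + |a - x|) ^ (-q))) ≤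
        ENNReal.ofReal (C * (1 + a) ^ (1 - p - q)) := by
  have hr : 0 < p + q - 1 := by linarith
  refine ⟨2 * 2 ^ (p + q) / (p + q - 1), by positivity, fun a ha => ?_⟩
  have hdecay : (1 + 2 * a) ^ (1 - (p + q)) ≤ (1 + a) ^ (1 - p - q) := by
    rw [← sub_sub]
    exact Real.rpow_le_rpow_of_nonpos (by linarith) (by linarith) (by linarith)
  calc (∫⁻ x in {x : ℝ | 2 * a ≤ |x|},
          ENNReal.ofReal ((1 + |a + x|) ^ (-p) * (1 + |a - x|) ^ (-q)))
      ≤ ∫⁻ x in {x : ℝ | 2 * a ≤ |x|},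
          ENNReal.ofReal (2 ^ (p + q)) * ENNReal.ofReal ((1 + |x|) ^ (-(p + q))) := by
        refine setLIntegral_mono (by fun_prop) fun x _ => ?_
        rw [← ENNReal.ofReal_mul (by positivity)]
        exact ENNReal.ofReal_le_ofReal <| one_add_abs_add_rpow_neg_mul_le hp.le hq.le
          (by rwa [abs_of_nonneg ha])
    _ ≤ 2 * ∫⁻ x in Ioi (2 * a),
          ENNReal.ofReal (2 ^ (p + q)) * ENNReal.ofReal ((1 + x) ^ (-(p + q))) :=
        setLIntegral_comp_abs_le_two_mul (fun y => _) (by positivity)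
    _ = ENNReal.ofReal (2 * 2 ^ (p + q) * ((1 + 2 * a) ^ (1 - (p + q)) / (p + q - 1))) := by
        rw [lintegral_const_mul' _ _ ENNReal.ofReal_ne_top,
          lintegral_Ioi_one_add_rpow_neg (by linarith) (by linarith),
          ENNReal.ofReal_mul (by positivity), ENNReal.ofReal_mul (by positivity),
          ENNReal.ofReal_ofNat, mul_assoc]
    _ ≤ ENNReal.ofReal (2 * 2 ^ (p + q) / (p + q - 1) * (1 + a) ^ (1 - p - q)) := by
        refine ENNReal.ofReal_le_ofReal ?_
        rw [mul_div_assoc', div_mul_eq_mul_div]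
        gcongr
end
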